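/- arXiv:2203.09256 — 4 statements merged into one kernel-verified Lean document; each statement's English description precedes it below -/
import Mathlib

section
/- If G is the complete graph K_n with n ≥ 2, then the bondage number of G equals ⌈n/2⌉. -/
open SimpleGraph

section Defs
variable {V : Type*}

/-- `S` is a dominating set of `G`. -/
def Dominates (G : SimpleGraph V) (S : Set V) : Prop :=
  ∀ v : V, v ∈ S ∨ ∃ u ∈ S, G.Adj u v

/-- The domination number `γ(G)`. -/
noncomputable def domNum (G : SimpleGraph V) [Fintype V] : ℕ :=
  sInf {n | ∃ S : Finset V, S.card = n ∧ Dominates G ↑S}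

/-- The bondage number `b(G)`. -/
noncomputable def bondageNum (G : SimpleGraph V) [Fintype V] : ℕ :=
  sInf {n | ∃ A : Finset (Sym2 V), ↑A ⊆ G.edgeSet ∧ A.card = n ∧
    domNum (G.deleteEdges ↑A) = domNum G + 1}

/-- The clique number `ω(G)`. -/
noncomputable def cliqueNum' (G : SimpleGraph V) [Fintype V] : ℕ :=
  sSup {n | ∃ s : Finset V, G.IsNClique n s}

/-- The degree of a vertex. -/
noncomputable def vdeg (G : SimpleGraph V) (v : V) : ℕ := (G.neighborSet v).ncard

/-- The maximum degree `Δ(G)`. -/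
noncomputable def maxDeg (G : SimpleGraph V) [Fintype V] : ℕ :=
  sSup {d | ∃ v, vdeg G v = d}

/-- A chordal graph: no induced cycle of length at least 4. -/
def Chordal (G : SimpleGraph V) : Prop :=
  ∀ n, 4 ≤ n → IsEmpty (cycleGraph n ↪g G)

/-- The corona `G ∘ K₁`: attach a pendant vertex to each vertex of `G`. -/
def coronaK1 (G : SimpleGraph V) : SimpleGraph (V ⊕ V) :=
  SimpleGraph.fromRel (fun a b =>
    (∃ u v, a = Sum.inl u ∧ b = Sum.inl v ∧ G.Adj u v) ∨
    (∃ u, a = Sum.inl u ∧ b = Sum.inr u))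

end Defs

/-!
Since `γ(Kₙ) = 1`, deleting a set `A` of edges raises the domination number exactly when no single
vertex dominates any more, i.e. when every vertex lies on an edge of `A`; such an edge cover has at
least `⌈n/2⌉` edges. Conversely, pairing up consecutive vertices gives an edge cover with `⌈n/2⌉`
edges in which the vertex `1` lies only on `s(1, 0)`, so `{1, 0}` still dominates and `γ` becomes `2`.
-/

open scoped Finset

lemma card_le_two_mul_card_of_forall_exists_mem {V : Type*} [Fintype V]
    {A : Finset (Sym2 V)} (hcov : ∀ v, ∃ e ∈ A, v ∈ e) : Fintype.card V ≤ 2 * #A := by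
  classical
  have hsub : (Finset.univ : Finset V) ⊆ A.biUnion Sym2.toFinset := fun v _ => by
    obtain ⟨e, he, hve⟩ := hcov v
    exact Finset.mem_biUnion.2 ⟨e, he, Sym2.mem_toFinset.2 hve⟩
  calc Fintype.card V ≤ #(A.biUnion Sym2.toFinset) := Finset.card_le_card hsub
    _ ≤ #A * 2 := Finset.card_biUnion_le_card_mul _ _ _ fun e _ => by
        rw [Sym2.card_toFinset]; split_ifs <;> omega
    _ = 2 * #A := mul_comm _ _

section Domination

variable {V : Type*}

lemma domNum_le_card [Fintype V] {G : SimpleGraph V} {S : Finset V} (h : Dominates G ↑S) :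
    domNum G ≤ #S :=
  Nat.sInf_le ⟨S, rfl, h⟩

lemma exists_card_eq_domNum [Fintype V] (G : SimpleGraph V) :
    ∃ S : Finset V, #S = domNum G ∧ Dominates G ↑S :=
  Nat.sInf_mem (s := {m | ∃ S : Finset V, #S = m ∧ Dominates G ↑S})
    ⟨_, Finset.univ, rfl, fun v => Or.inl (Finset.mem_coe.2 (Finset.mem_univ v))⟩

lemma domNum_pos [Fintype V] [Nonempty V] (G : SimpleGraph V) : 0 < domNum G := by
  obtain ⟨S, hS, hdom⟩ := exists_card_eq_domNum G
  rw [← hS, Finset.card_pos]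
  rcases hdom (Classical.arbitrary V) with hv | ⟨u, hu, -⟩
  · exact ⟨_, hv⟩
  · exact ⟨u, hu⟩

lemma domNum_eq_one_iff [Fintype V] [Nonempty V] (G : SimpleGraph V) :
    domNum G = 1 ↔ ∃ v, Dominates G {v} := by
  constructor
  · intro h
    obtain ⟨S, hS, hdom⟩ := exists_card_eq_domNum G
    obtain ⟨v, rfl⟩ := Finset.card_eq_one.1 (hS.trans h)
    exact ⟨v, by simpa using hdom⟩
  · rintro ⟨v, hv⟩
    have := domNum_le_card (S := {v}) (by simpa using hv)
    have := domNum_pos G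
    simp only [Finset.card_singleton] at *
    omega

lemma dominates_singleton_deleteEdges_top_iff {A : Set (Sym2 V)}
    (hA : A ⊆ (⊤ : SimpleGraph V).edgeSet) {v : V} :
    Dominates ((⊤ : SimpleGraph V).deleteEdges A) {v} ↔ ∀ e ∈ A, v ∉ e := by
  constructor
  · intro hdom e he hve
    have hspec : s(v, Sym2.Mem.other hve) = e := Sym2.other_spec hve
    have hne : v ≠ Sym2.Mem.other hve := by
      have := hA he
      rwa [← hspec, SimpleGraph.mem_edgeSet, SimpleGraph.top_adj] at this
    obtain hw | ⟨x, rfl, hadj⟩ := hdom (Sym2.Mem.other hve)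
    · exact hne (Set.mem_singleton_iff.1 hw).symm
    · exact (SimpleGraph.deleteEdges_adj.1 hadj).2 (hspec.symm ▸ he)
  · intro hv u
    by_cases huv : u = v
    · exact Or.inl huv
    · exact Or.inr ⟨v, rfl, SimpleGraph.deleteEdges_adj.2
        ⟨Ne.symm huv, fun he => hv _ he (Sym2.mem_mk_left v u)⟩⟩

lemma domNum_deleteEdges_top_eq_one_iff [Fintype V] [Nonempty V] {A : Set (Sym2 V)}
    (hA : A ⊆ (⊤ : SimpleGraph V).edgeSet) :
    domNum ((⊤ : SimpleGraph V).deleteEdges A) = 1 ↔ ∃ v, ∀ e ∈ A, v ∉ e := by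
  simp only [domNum_eq_one_iff, dominates_singleton_deleteEdges_top_iff hA]

lemma domNum_top [Fintype V] [Nonempty V] : domNum (⊤ : SimpleGraph V) = 1 := by
  have := domNum_deleteEdges_top_eq_one_iff (V := V) (Set.empty_subset _)
  rw [SimpleGraph.deleteEdges_empty] at this
  exact this.2 ⟨Classical.arbitrary V, fun _ he => he.elim⟩

lemma dominates_pair_deleteEdges_top {A : Set (Sym2 V)} {u w : V}
    (hu : ∀ e ∈ A, u ∈ e → e = s(u, w)) :
    Dominates ((⊤ : SimpleGraph V).deleteEdges A) {u, w} := by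
  intro v
  by_cases hv : v = u ∨ v = w
  · exact Or.inl hv
  · push Not at hv
    refine Or.inr ⟨u, Set.mem_insert u _, SimpleGraph.deleteEdges_adj.2
      ⟨Ne.symm hv.1, fun he => hv.2 ?_⟩⟩
    exact Sym2.congr_right.1 (hu _ he (Sym2.mem_mk_left u v))

lemma domNum_deleteEdges_top_eq_two [Fintype V] {A : Set (Sym2 V)}
    (hA : A ⊆ (⊤ : SimpleGraph V).edgeSet) (hcov : ∀ v, ∃ e ∈ A, v ∈ e) {u w : V}
    (hu : ∀ e ∈ A, u ∈ e → e = s(u, w)) :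
    domNum ((⊤ : SimpleGraph V).deleteEdges A) = 2 := by
  classical
  have : Nonempty V := ⟨u⟩
  have hle : domNum ((⊤ : SimpleGraph V).deleteEdges A) ≤ 2 :=
    (domNum_le_card (S := {u, w}) (by simpa using dominates_pair_deleteEdges_top hu)).trans
      Finset.card_le_two
  have hne : domNum ((⊤ : SimpleGraph V).deleteEdges A) ≠ 1 := by
    rw [Ne, domNum_deleteEdges_top_eq_one_iff hA]
    rintro ⟨v, hv⟩
    obtain ⟨e, he, hve⟩ := hcov v
    exact hv e he hve
  have := domNum_pos ((⊤ : SimpleGraph V).deleteEdges A)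
  omega

lemma card_le_two_mul_card_of_domNum_deleteEdges_top_ne_one [Fintype V] [Nonempty V]
    {A : Finset (Sym2 V)} (hA : ↑A ⊆ (⊤ : SimpleGraph V).edgeSet)
    (hγ : domNum ((⊤ : SimpleGraph V).deleteEdges ↑A) ≠ 1) : Fintype.card V ≤ 2 * #A := by
  refine card_le_two_mul_card_of_forall_exists_mem fun v => ?_
  by_contra! hv
  exact hγ ((domNum_deleteEdges_top_eq_one_iff hA).2 ⟨v, hv⟩)

end Domination

section Pairing

variable (n : ℕ) [NeZero n]

/-- The edges `s(2i, 2i+1)` for `2i < n`; when `n` is odd the last one wraps around to `s(n-1, 0)`. -/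
def pairingEdges : Finset (Sym2 (Fin n)) :=
  (Finset.range ((n + 1) / 2)).image fun i => s(Fin.ofNat n (2 * i), Fin.ofNat n (2 * i + 1))

lemma card_pairingEdges_le : #(pairingEdges n) ≤ (n + 1) / 2 :=
  Finset.card_image_le.trans (Finset.card_range _).le

variable {n}

lemma mem_pairingEdges {e : Sym2 (Fin n)} :
    e ∈ pairingEdges n ↔
      ∃ i, 2 * i < n ∧ s(Fin.ofNat n (2 * i), Fin.ofNat n (2 * i + 1)) = e := by
  simp only [pairingEdges, Finset.mem_image, Finset.mem_range]
  exact exists_congr fun i => and_congr_left' (by omega)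

lemma pairingEdges_subset_edgeSet (hn : 2 ≤ n) :
    ↑(pairingEdges n) ⊆ (⊤ : SimpleGraph (Fin n)).edgeSet := by
  intro e he
  obtain ⟨i, hi, rfl⟩ := mem_pairingEdges.1 he
  rw [SimpleGraph.mem_edgeSet, SimpleGraph.top_adj, Ne, Fin.ext_iff, Fin.val_ofNat,
    Fin.val_ofNat, Nat.mod_eq_of_lt hi]
  rcases Nat.lt_or_ge (2 * i + 1) n with h | h
  · rw [Nat.mod_eq_of_lt h]; omega
  · rw [show 2 * i + 1 = n by omega, Nat.mod_self]; omega

lemma exists_mem_pairingEdges (v : Fin n) : ∃ e ∈ pairingEdges n, v ∈ e := by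
  refine ⟨_, mem_pairingEdges.2 ⟨v / 2, by omega, rfl⟩, ?_⟩
  rcases Nat.mod_two_eq_zero_or_one v with h | h
  · convert Sym2.mem_mk_left _ _
    ext
    rw [Fin.val_ofNat, Nat.mod_eq_of_lt (by omega)]
    omega
  · convert Sym2.mem_mk_right _ _
    ext
    rw [Fin.val_ofNat, Nat.mod_eq_of_lt (by omega)]
    omega

lemma eq_of_one_mem_pairingEdges (hn : 2 ≤ n) {e : Sym2 (Fin n)} (he : e ∈ pairingEdges n)
    (h1 : 1 ∈ e) : e = s(1, 0) := by
  obtain ⟨i, hi, rfl⟩ := mem_pairingEdges.1 he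
  have h1n : (1 : Fin n).val = 1 := Nat.mod_eq_of_lt hn
  rcases Sym2.mem_iff.1 h1 with h | h <;> rw [Fin.ext_iff, h1n, Fin.val_ofNat] at h
  · rw [Nat.mod_eq_of_lt hi] at h; omega
  · rcases Nat.lt_or_ge (2 * i + 1) n with hlt | hge
    · rw [Nat.mod_eq_of_lt hlt] at h
      obtain rfl : i = 0 := by omega
      exact Sym2.eq_swap
    · rw [show 2 * i + 1 = n by omega, Nat.mod_self] at h; omega

end Pairing

/-- `b(K_n) = ⌈n/2⌉` for `n ≥ 2`. -/
theorem bondage_complete (n : ℕ) (hn : 2 ≤ n) :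
    bondageNum (⊤ : SimpleGraph (Fin n)) = (n + 1) / 2 := by
  have : NeZero n := ⟨by omega⟩
  have hA := pairingEdges_subset_edgeSet hn
  have hγ : domNum ((⊤ : SimpleGraph (Fin n)).deleteEdges ↑(pairingEdges n)) =
      domNum (⊤ : SimpleGraph (Fin n)) + 1 := by
    rw [domNum_top, domNum_deleteEdges_top_eq_two hA exists_mem_pairingEdges
      fun e he => eq_of_one_mem_pairingEdges hn he]
  rw [bondageNum]
  refine le_antisymm (le_trans (Nat.sInf_le ⟨_, hA, rfl, hγ⟩) (card_pairingEdges_le n))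
    (le_csInf ⟨_, _, hA, rfl, hγ⟩ ?_)
  rintro m ⟨B, hB, rfl, hγB⟩
  have hcard := card_le_two_mul_card_of_domNum_deleteEdges_top_ne_one hB (by rw [hγB, domNum_top]; omega)
  rw [Fintype.card_fin] at hcard
  omega
end

section
/- For any graph G and vertices u, v with d(u,v) ≤ 2 (u ≠ v), the bondage number satisfies b(G) ≤ deg(u) + deg(v) − 1. -/
open SimpleGraph

section Aux
variable {V : Type*} [Fintype V]

lemma dominates_univ' (G : SimpleGraph V) : Dominates G ↑(Finset.univ : Finset V) :=
  fun v => Or.inl (by simp)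

lemma domNum_le' (G : SimpleGraph V) {S : Finset V} (h : Dominates G ↑S) :
    domNum G ≤ S.card := Nat.sInf_le ⟨S, rfl, h⟩

lemma exists_min_dom' (G : SimpleGraph V) :
    ∃ S : Finset V, S.card = domNum G ∧ Dominates G ↑S :=
  Nat.sInf_mem (⟨(Finset.univ : Finset V).card, Finset.univ, rfl, dominates_univ' G⟩ :
    Set.Nonempty {n | ∃ S : Finset V, S.card = n ∧ Dominates G ↑S})

omit [Fintype V] in
lemma dominates_mono' {G H : SimpleGraph V} (h : G ≤ H) {S : Set V}
    (hS : Dominates G S) : Dominates H S := by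
  intro x
  rcases hS x with hx | ⟨w, hw, hadj⟩
  · exact Or.inl hx
  · exact Or.inr ⟨w, hw, h hadj⟩

lemma domNum_le_domNum_deleteEdges' (G : SimpleGraph V) (s : Set (Sym2 V)) :
    domNum G ≤ domNum (G.deleteEdges s) := by
  obtain ⟨D, hc, hD⟩ := exists_min_dom' (G.deleteEdges s)
  rw [← hc]
  exact domNum_le' _ (dominates_mono' (deleteEdges_le _) hD)

lemma domNum_deleteEdges_single_le' (G : SimpleGraph V) (x y : V) :
    domNum (G.deleteEdges {s(x,y)}) ≤ domNum G + 1 := by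
  classical
  obtain ⟨D, hcard, hD⟩ := exists_min_dom' G
  by_cases hx : Dominates (G.deleteEdges {s(x,y)}) ↑(insert x D)
  · calc domNum (G.deleteEdges {s(x,y)}) ≤ (insert x D).card := domNum_le' _ hx
      _ ≤ D.card + 1 := Finset.card_insert_le _ _
      _ = domNum G + 1 := by rw [hcard]
  · have hxD : x ∈ D := by
      unfold Dominates at hx
      push_neg at hx
      obtain ⟨z, hz, hz2⟩ := hx
      rcases hD z with hzD | ⟨w, hw, hwz⟩
      · exact absurd (Finset.mem_coe.2 (Finset.mem_insert_of_mem (Finset.mem_coe.1 hzD))) hz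
      · have hwi : w ∈ (↑(insert x D) : Set V) :=
          Finset.mem_coe.2 (Finset.mem_insert_of_mem hw)
        have := hz2 w hwi
        rw [deleteEdges_adj] at this
        have heq : s(w, z) = s(x, y) := by
          by_contra hne
          exact this ⟨hwz, by simpa using hne⟩
        rw [Sym2.eq_iff] at heq
        rcases heq with ⟨rfl, rfl⟩ | ⟨rfl, rfl⟩
        · exact hw
        · exact absurd (Finset.mem_coe.2 (Finset.mem_insert_self _ _)) hz
    have hy : Dominates (G.deleteEdges {s(x,y)}) ↑(insert y D) := by
      intro t
      rcases hD t with htD | ⟨w, hw, hwt⟩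
      · exact Or.inl (Finset.mem_coe.2 (Finset.mem_insert_of_mem (Finset.mem_coe.1 htD)))
      · by_cases heq : s(w, t) = s(x, y)
        · rw [Sym2.eq_iff] at heq
          rcases heq with ⟨rfl, rfl⟩ | ⟨rfl, rfl⟩
          · exact Or.inl (Finset.mem_coe.2 (Finset.mem_insert_self _ _))
          · exact Or.inl (Finset.mem_coe.2 (Finset.mem_insert_of_mem hxD))
        · exact Or.inr ⟨w, Finset.mem_coe.2 (Finset.mem_insert_of_mem hw),
            by rw [deleteEdges_adj]; exact ⟨hwt, by simpa using heq⟩⟩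
    calc domNum (G.deleteEdges {s(x,y)}) ≤ (insert y D).card := domNum_le' _ hy
      _ ≤ D.card + 1 := Finset.card_insert_le _ _
      _ = domNum G + 1 := by rw [hcard]

lemma exists_exact' (G : SimpleGraph V) :
    ∀ A : Finset (Sym2 V), domNum G + 1 ≤ domNum (G.deleteEdges ↑A) →
    ∃ B ⊆ A, domNum (G.deleteEdges ↑B) = domNum G + 1 := by
  classical
  intro A
  induction A using Finset.strongInduction with
  | _ A IH =>
    intro h
    have hA : A.Nonempty := by
      rcases Finset.eq_empty_or_nonempty A with rfl | h'
      · rw [Finset.coe_empty, deleteEdges_empty] at h; omega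
      · exact h'
    obtain ⟨e, he⟩ := hA
    by_cases h' : domNum G + 1 ≤ domNum (G.deleteEdges ↑(A.erase e))
    · obtain ⟨B, hBsub, hB⟩ := IH (A.erase e) (Finset.erase_ssubset he) h'
      exact ⟨B, hBsub.trans (Finset.erase_subset _ _), hB⟩
    · refine ⟨A, subset_rfl, le_antisymm ?_ h⟩
      push_neg at h'
      have key : G.deleteEdges ↑A = (G.deleteEdges ↑(A.erase e)).deleteEdges {e} := by
        ext a b
        simp only [deleteEdges_adj, Finset.mem_coe, Finset.mem_erase, Set.mem_singleton_iff]
        constructor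
        · rintro ⟨hadj, hmem⟩
          exact ⟨⟨hadj, fun hc => hmem hc.2⟩, fun hc => hmem (hc ▸ he)⟩
        · rintro ⟨⟨hadj, h1⟩, h2⟩
          exact ⟨hadj, fun hmem => (em (s(a,b) = e)).elim h2 (fun hne => h1 ⟨hne, hmem⟩)⟩
      rw [key]
      induction e using Sym2.ind with
      | _ x y =>
        calc domNum ((G.deleteEdges ↑(A.erase s(x,y))).deleteEdges {s(x,y)})
            ≤ domNum (G.deleteEdges ↑(A.erase s(x,y))) + 1 :=
              domNum_deleteEdges_single_le' _ x y
          _ ≤ domNum G + 1 := by omega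

end Aux

/-- if `d(u,v) ≤ 2` then `b(G) ≤ deg u + deg v - 1`. -/
theorem bondage_le_deg_add_deg (V : Type*) [Fintype V] (G : SimpleGraph V) (u v : V)
    (huv : u ≠ v) (hr : G.Reachable u v) (hd : G.dist u v ≤ 2) :
    bondageNum G ≤ vdeg G u + vdeg G v - 1 := by
  classical
  have hvdeg : ∀ x : V, vdeg G x = G.degree x := fun x => by
    rw [vdeg, Set.ncard_eq_toFinset_card']; rfl
  have hdpos : 0 < G.dist u v := hr.pos_dist_of_ne huv
  -- we produce, in each case, a suitable edge set A
  suffices h : ∃ A : Finset (Sym2 V), ↑A ⊆ G.edgeSet ∧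
      A.card ≤ vdeg G u + vdeg G v - 1 ∧ domNum G + 1 ≤ domNum (G.deleteEdges ↑A) by
    obtain ⟨A, hsub, hcard, hbig⟩ := h
    obtain ⟨B, hBsub, hB⟩ := exists_exact' G A hbig
    have h1 : bondageNum G ≤ B.card :=
      Nat.sInf_le ⟨B, (Finset.coe_subset.2 hBsub).trans hsub, rfl, hB⟩
    exact h1.trans ((Finset.card_le_card hBsub).trans hcard)
  interval_cases hdist : G.dist u v
  · -- distance 1 : u and v adjacent
    have hadj : G.Adj u v := dist_eq_one_iff_adj.1 hdist
    refine ⟨G.incidenceFinset u ∪ G.incidenceFinset v, ?_, ?_, ?_⟩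
    · intro e he
      rcases Finset.mem_union.1 he with h | h
      · exact G.incidenceSet_subset u ((G.mem_incidenceFinset u e).1 h)
      · exact G.incidenceSet_subset v ((G.mem_incidenceFinset v e).1 h)
    · have hsum := Finset.card_union_add_card_inter (G.incidenceFinset u) (G.incidenceFinset v)
      have hmem : s(u, v) ∈ G.incidenceFinset u ∩ G.incidenceFinset v := by
        rw [Finset.mem_inter, G.mem_incidenceFinset, G.mem_incidenceFinset]
        exact ⟨(G.mem_incidenceSet u v).2 hadj, Sym2.eq_swap ▸ (G.mem_incidenceSet v u).2 hadj.symm⟩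
      have h1 : 1 ≤ (G.incidenceFinset u ∩ G.incidenceFinset v).card :=
        Finset.card_pos.2 ⟨_, hmem⟩
      rw [hvdeg u, hvdeg v, ← G.card_incidenceFinset_eq_degree u,
        ← G.card_incidenceFinset_eq_degree v]
      omega
    · set A : Finset (Sym2 V) := G.incidenceFinset u ∪ G.incidenceFinset v with hA
      set H := G.deleteEdges ↑A with hH
      have hu_iso : ∀ x, ¬ H.Adj u x := by
        intro x hx
        rw [hH, deleteEdges_adj] at hx
        exact hx.2 (Finset.mem_coe.2 (Finset.mem_union_left _
          ((G.mem_incidenceFinset u _).2 ((G.mem_incidenceSet u x).2 hx.1))))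
      have hv_iso : ∀ x, ¬ H.Adj v x := by
        intro x hx
        rw [hH, deleteEdges_adj] at hx
        exact hx.2 (Finset.mem_coe.2 (Finset.mem_union_right _
          ((G.mem_incidenceFinset v _).2 ((G.mem_incidenceSet v x).2 hx.1))))
      by_contra hnot
      push_neg at hnot
      have hmono := domNum_le_domNum_deleteEdges' G ↑A
      obtain ⟨D, hcardD, hD⟩ := exists_min_dom' H
      have huD : u ∈ D := by
        rcases hD u with h | ⟨w, hw, hwu⟩
        · exact Finset.mem_coe.1 h
        · exact absurd hwu.symm (hu_iso w)
      have hvD : v ∈ D := by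
        rcases hD v with h | ⟨w, hw, hwv⟩
        · exact Finset.mem_coe.1 h
        · exact absurd hwv.symm (hv_iso w)
      have hdom' : Dominates G ↑(D.erase u) := by
        intro x
        by_cases hx : x = u
        · subst hx
          exact Or.inr ⟨v, Finset.mem_coe.2 (Finset.mem_erase.2 ⟨huv.symm, hvD⟩), hadj.symm⟩
        · rcases hD x with hxD | ⟨w, hw, hwx⟩
          · exact Or.inl (Finset.mem_coe.2 (Finset.mem_erase.2 ⟨hx, Finset.mem_coe.1 hxD⟩))
          · have hwu : w ≠ u := fun h => hu_iso x (h ▸ hwx)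
            exact Or.inr ⟨w, Finset.mem_coe.2
              (Finset.mem_erase.2 ⟨hwu, Finset.mem_coe.1 hw⟩),
              ((deleteEdges_adj).1 hwx).1⟩
      have hle : domNum G ≤ (D.erase u).card := domNum_le' G hdom'
      rw [Finset.card_erase_of_mem huD] at hle
      have hDpos : 1 ≤ D.card := Finset.card_pos.2 ⟨u, huD⟩
      omega
  · -- distance 2
    have hnadj : ¬ G.Adj u v := by
      intro h
      have := dist_eq_one_iff_adj.2 h
      omega
    obtain ⟨p, hp⟩ := exists_walk_of_dist_ne_zero (G := G) (u := u) (v := v) (by omega)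
    rw [hdist] at hp
    set w := p.getVert 1 with hw
    have hadj_uw : G.Adj u w := by
      have := p.adj_getVert_succ (i := 0) (by omega)
      rwa [p.getVert_zero] at this
    have hadj_wv : G.Adj w v := by
      have := p.adj_getVert_succ (i := 1) (by omega)
      have h2 : p.getVert 2 = v := by
        conv_lhs => rw [show (2 : ℕ) = p.length from hp.symm]
        exact p.getVert_length
      rwa [h2] at this
    have hw_ne_u : w ≠ u := hadj_uw.ne.symm
    have hw_ne_v : w ≠ v := hadj_wv.ne
    have hvw_mem : s(v, w) ∈ G.incidenceFinset v :=
      (G.mem_incidenceFinset v _).2 ((G.mem_incidenceSet v w).2 hadj_wv.symm)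
    refine ⟨G.incidenceFinset u ∪ (G.incidenceFinset v).erase s(v, w), ?_, ?_, ?_⟩
    · intro e he
      rcases Finset.mem_union.1 he with h | h
      · exact G.incidenceSet_subset u ((G.mem_incidenceFinset u e).1 h)
      · exact G.incidenceSet_subset v
          ((G.mem_incidenceFinset v e).1 (Finset.mem_of_mem_erase h))
    · have hle := Finset.card_union_le (G.incidenceFinset u)
        ((G.incidenceFinset v).erase s(v, w))
      rw [Finset.card_erase_of_mem hvw_mem] at hle
      have hdegv : 1 ≤ (G.incidenceFinset v).card := Finset.card_pos.2 ⟨_, hvw_mem⟩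
      rw [hvdeg u, hvdeg v, ← G.card_incidenceFinset_eq_degree u,
        ← G.card_incidenceFinset_eq_degree v]
      omega
    · set A : Finset (Sym2 V) :=
        G.incidenceFinset u ∪ (G.incidenceFinset v).erase s(v, w) with hA
      set H := G.deleteEdges ↑A with hH
      have hu_iso : ∀ x, ¬ H.Adj u x := by
        intro x hx
        rw [hH, deleteEdges_adj] at hx
        exact hx.2 (Finset.mem_coe.2 (Finset.mem_union_left _
          ((G.mem_incidenceFinset u _).2 ((G.mem_incidenceSet u x).2 hx.1))))
      have hv_nbr : ∀ x, H.Adj v x → x = w := by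
        intro x hx
        by_contra hxw
        rw [hH, deleteEdges_adj] at hx
        refine hx.2 (Finset.mem_coe.2 (Finset.mem_union_right _ (Finset.mem_erase.2
          ⟨?_, (G.mem_incidenceFinset v _).2 ((G.mem_incidenceSet v x).2 hx.1)⟩)))
        intro heq
        rw [Sym2.eq_iff] at heq
        rcases heq with ⟨-, h2⟩ | ⟨h1, -⟩
        · exact hxw h2
        · exact hw_ne_v h1.symm
      by_contra hnot
      push_neg at hnot
      have hmono := domNum_le_domNum_deleteEdges' G ↑A
      obtain ⟨D, hcardD, hD⟩ := exists_min_dom' H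
      have huD : u ∈ D := by
        rcases hD u with h | ⟨y, hy, hyu⟩
        · exact Finset.mem_coe.1 h
        · exact absurd hyu.symm (hu_iso y)
      have hDpos : 1 ≤ D.card := Finset.card_pos.2 ⟨u, huD⟩
      have hv_or : v ∈ D ∨ w ∈ D := by
        rcases hD v with h | ⟨y, hy, hyv⟩
        · exact Or.inl (Finset.mem_coe.1 h)
        · have : y = w := hv_nbr y hyv.symm
          exact Or.inr (this ▸ Finset.mem_coe.1 hy)
      by_cases hwD : w ∈ D
      · -- D.erase u dominates G
        have hdom' : Dominates G ↑(D.erase u) := by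
          intro x
          by_cases hx : x = u
          · subst hx
            exact Or.inr ⟨w, Finset.mem_coe.2 (Finset.mem_erase.2 ⟨hw_ne_u, hwD⟩),
              hadj_uw.symm⟩
          · rcases hD x with hxD | ⟨y, hy, hyx⟩
            · exact Or.inl (Finset.mem_coe.2 (Finset.mem_erase.2 ⟨hx, Finset.mem_coe.1 hxD⟩))
            · have hyu : y ≠ u := fun h => hu_iso x (h ▸ hyx)
              exact Or.inr ⟨y, Finset.mem_coe.2
                (Finset.mem_erase.2 ⟨hyu, Finset.mem_coe.1 hy⟩),
                ((deleteEdges_adj).1 hyx).1⟩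
        have hle : domNum G ≤ (D.erase u).card := domNum_le' G hdom'
        rw [Finset.card_erase_of_mem huD] at hle
        omega
      · have hvD : v ∈ D := hv_or.resolve_right hwD
        have hvDu : v ∈ D.erase u := Finset.mem_erase.2 ⟨huv.symm, hvD⟩
        have hw_notin : w ∉ (D.erase u).erase v := fun h =>
          hwD (Finset.mem_of_mem_erase (Finset.mem_of_mem_erase h))
        have hD2 : 2 ≤ D.card := by
          have : ({u, v} : Finset V) ⊆ D := by
            intro z hz
            rcases Finset.mem_insert.1 hz with rfl | hz
            · exact huD
            · exact (Finset.mem_singleton.1 hz) ▸ hvD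
          have := Finset.card_le_card this
          rwa [Finset.card_pair huv] at this
        have hdom' : Dominates G ↑(insert w ((D.erase u).erase v)) := by
          intro x
          by_cases hxu : x = u
          · subst hxu
            exact Or.inr ⟨w, Finset.mem_coe.2 (Finset.mem_insert_self _ _), hadj_uw.symm⟩
          by_cases hxv : x = v
          · subst hxv
            exact Or.inr ⟨w, Finset.mem_coe.2 (Finset.mem_insert_self _ _), hadj_wv⟩
          by_cases hxw : x = w
          · subst hxw
            exact Or.inl (Finset.mem_coe.2 (Finset.mem_insert_self _ _))
          rcases hD x with hxD | ⟨y, hy, hyx⟩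
          · exact Or.inl (Finset.mem_coe.2 (Finset.mem_insert_of_mem
              (Finset.mem_erase.2 ⟨hxv, Finset.mem_erase.2 ⟨hxu, Finset.mem_coe.1 hxD⟩⟩)))
          · have hyu : y ≠ u := fun h => hu_iso x (h ▸ hyx)
            have hyv : y ≠ v := by
              intro h
              exact hxw (hv_nbr x (h ▸ hyx))
            exact Or.inr ⟨y, Finset.mem_coe.2 (Finset.mem_insert_of_mem
              (Finset.mem_erase.2 ⟨hyv, Finset.mem_erase.2 ⟨hyu, Finset.mem_coe.1 hy⟩⟩)),
              ((deleteEdges_adj).1 hyx).1⟩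
        have hle : domNum G ≤ (insert w ((D.erase u).erase v)).card := domNum_le' G hdom'
        rw [Finset.card_insert_of_notMem hw_notin, Finset.card_erase_of_mem hvDu,
          Finset.card_erase_of_mem huD] at hle
        omega
end

section
/- Let G be a chordal graph, K a clique of G, and let A_i denote the set of vertices at distance exactly i from K. If C ⊆ A_i (i ≥ 1) induces a connected subgraph of G[A_i], then N(C) ∩ A_{i−1} is a clique of G. -/
open SimpleGraph

/-!
If `x, y ∈ N(C) ∩ A_{i-1}` were distinct and non-adjacent, they would be joined by a path with
interior in `C` and, descending to the clique `K` along shortest walks, by a path with interior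
at distance at most `i - 2` from `K`. A vertex of `A_i` is at distance at least `i` from `K`, so
the two interiors are disjoint and no edge joins them. Choosing both paths shortest makes them
induced, and together they form an induced cycle of length at least 4, which a chordal graph
does not contain. (For `i = 1` both vertices lie in `K`.)
-/

namespace SimpleGraph

variable {V : Type*} {G : SimpleGraph V}

theorem cycleGraph_adj_iff_of_lt {n : ℕ} {a b : Fin n} (h : a < b) :
    (cycleGraph n).Adj a b ↔ b.val = a.val + 1 ∨ (a.val = 0 ∧ b.val = n - 1) := by
  rw [cycleGraph_adj', Fin.coe_sub_iff_lt.mpr h, Fin.coe_sub_iff_le.mpr h.le]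
  have := b.isLt
  rw [Fin.lt_def] at h
  omega

theorem nonempty_cycleGraph_embedding {n : ℕ} (g : ℕ → V)
    (hinj : ∀ a b, a < b → b < n → g a ≠ g b)
    (hadj : ∀ a b, a < b → b < n →
      (G.Adj (g a) (g b) ↔ b = a + 1 ∨ (a = 0 ∧ b = n - 1))) :
    Nonempty (cycleGraph n ↪g G) := by
  refine ⟨⟨⟨fun j => g j, fun a b h => ?_⟩, fun {a b} => ?_⟩⟩
  · by_contra hab
    rcases lt_or_gt_of_ne hab with hab | hab
    · exact hinj a b hab b.isLt h
    · exact hinj b a hab a.isLt h.symm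
  · rcases lt_trichotomy a b with hab | rfl | hab
    · exact (hadj a b hab b.isLt).trans (cycleGraph_adj_iff_of_lt hab).symm
    · simp
    · rw [G.adj_comm, (cycleGraph n).adj_comm]
      exact (hadj b a hab a.isLt).trans (cycleGraph_adj_iff_of_lt hab).symm

namespace Walk

def IsInducedPath {u v : V} (p : G.Walk u v) : Prop :=
  p.IsPath ∧ ∀ a b, a + 1 < b → b ≤ p.length → ¬G.Adj (p.getVert a) (p.getVert b)

theorem IsInducedPath.adj_getVert_iff {u v : V} {p : G.Walk u v} (hp : p.IsInducedPath)
    {a b : ℕ} (hab : a < b) (hb : b ≤ p.length) :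
    G.Adj (p.getVert a) (p.getVert b) ↔ b = a + 1 := by
  refine ⟨fun h => ?_, fun h => h ▸ p.adj_getVert_succ (by omega)⟩
  by_contra hne
  exact hp.2 a b (by omega) hb h

theorem IsInducedPath.getVert_ne {u v : V} {p : G.Walk u v} (hp : p.IsInducedPath)
    {a b : ℕ} (hab : a < b) (hb : b ≤ p.length) : p.getVert a ≠ p.getVert b :=
  fun h => hab.ne (hp.1.getVert_injOn (by simp; omega) (by simpa using hb) h)

theorem exists_length_lt_of_adj_getVert {u v : V} (p : G.Walk u v) {a b : ℕ}
    (hab : a + 1 < b) (hb : b ≤ p.length) (h : G.Adj (p.getVert a) (p.getVert b)) :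
    ∃ q : G.Walk u v, q.length < p.length ∧ q.support ⊆ p.support := by
  refine ⟨(p.take a).append (cons h (p.drop b)), ?_, ?_⟩
  · simp only [length_append, take_length, length_cons, drop_length]
    omega
  · intro w hw
    rw [mem_support_append_iff, support_cons, List.mem_cons] at hw
    rcases hw with hw | rfl | hw
    · exact (p.isSubwalk_take a).support_subset hw
    · exact p.getVert_mem_support a
    · exact (p.isSubwalk_drop b).support_subset hw

theorem exists_isInducedPath {u v : V} {U : Set V} (w : G.Walk u v)
    (hw : ∀ x ∈ w.support, x ∈ U) :
    ∃ p : G.Walk u v, p.IsInducedPath ∧ ∀ x ∈ p.support, x ∈ U := by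
  classical
  have hex : ∃ n, ∃ p : G.Walk u v, (∀ x ∈ p.support, x ∈ U) ∧ p.length = n :=
    ⟨_, w, hw, rfl⟩
  obtain ⟨p, hpU, hpn⟩ := Nat.find_spec hex
  have hbU : ∀ x ∈ p.bypass.support, x ∈ U :=
    fun x hx => hpU x (p.support_bypass_subset_support hx)
  -- `p.bypass` is still a shortest walk inside `U`, so a chord would shorten it
  refine ⟨p.bypass, ⟨p.bypass_isPath, fun a b hab hb h => ?_⟩, hbU⟩
  obtain ⟨q, hq, hqs⟩ := p.bypass.exists_length_lt_of_adj_getVert hab hb h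
  have := Nat.find_min' hex ⟨q, fun x hx => hbU x (hqs hx), rfl⟩
  have := p.length_bypass_le_length
  omega

theorem IsPath.getVert_mem_of_pos_of_lt {u v : V} {S : Set V} {p : G.Walk u v}
    (hp : p.IsPath) (hS : ∀ x ∈ p.support, x = u ∨ x = v ∨ x ∈ S) {a : ℕ} (ha₀ : 0 < a)
    (ha : a < p.length) :
    p.getVert a ∈ S := by
  have hinj := hp.getVert_injOn
  rcases hS _ (p.getVert_mem_support a) with h | h | h
  · exact absurd (hinj (by simp; omega) (by simp) (h.trans p.getVert_zero.symm)) ha₀.ne'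
  · exact absurd (hinj (by simp; omega) (by simp) (h.trans p.getVert_length.symm)) ha.ne
  · exact h

theorem exists_walk_length_lt_of_mem_support {u v w : V} (p : G.Walk u w)
    (hv : v ∈ p.support) (hvu : v ≠ u) : ∃ r : G.Walk v w, r.length < p.length := by
  obtain ⟨a, rfl, ha⟩ := mem_support_iff_exists_getVert.mp hv
  have ha₀ : a ≠ 0 := by rintro rfl; exact hvu p.getVert_zero
  exact ⟨p.drop a, by rw [drop_length]; omega⟩

end Walk

theorem nonempty_cycleGraph_embedding_of_isInducedPath {x y : V} {p q : G.Walk x y}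
    (hp : p.IsInducedPath) (hq : q.IsInducedPath) (hp₂ : 2 ≤ p.length) (hq₂ : 2 ≤ q.length)
    (hpq : ∀ a b, 0 < a → a < p.length → 0 < b → b < q.length →
      p.getVert a ≠ q.getVert b ∧ ¬G.Adj (p.getVert a) (q.getVert b)) :
    Nonempty (cycleGraph (p.length + q.length) ↪g G) := by
  set n := p.length + q.length with hn
  let g : ℕ → V := fun j => if j ≤ p.length then p.getVert j else q.getVert (n - j)
  have hg_p : ∀ j ≤ p.length, g j = p.getVert j := fun j hj => if_pos hj
  have hg_q : ∀ j, p.length ≤ j → j ≤ n → g j = q.getVert (n - j) := by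
    intro j hj hjn
    rcases hj.lt_or_eq with hj | rfl
    · exact if_neg (by omega)
    · rw [hg_p _ le_rfl, p.getVert_length, show n - p.length = q.length by omega,
        q.getVert_length]
  have hg_zero : g 0 = q.getVert 0 := by
    rw [hg_p 0 (by omega), p.getVert_zero, q.getVert_zero]
  apply nonempty_cycleGraph_embedding g
  · intro a b hab hb
    by_cases hbp : b ≤ p.length
    · rw [hg_p a (by omega), hg_p b hbp]
      exact hp.getVert_ne hab hbp
    by_cases hap : p.length ≤ a
    · rw [hg_q a hap (by omega), hg_q b (by omega) (by omega)]
      exact (hq.getVert_ne (by omega) (by omega)).symm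
    rcases Nat.eq_zero_or_pos a with rfl | ha₀
    · rw [hg_zero, hg_q b (by omega) (by omega)]
      exact hq.getVert_ne (by omega) (by omega)
    · rw [hg_p a (by omega), hg_q b (by omega) (by omega)]
      exact (hpq a (n - b) ha₀ (by omega) (by omega) (by omega)).1
  · intro a b hab hb
    by_cases hbp : b ≤ p.length
    · rw [hg_p a (by omega), hg_p b hbp, hp.adj_getVert_iff hab hbp]
      omega
    by_cases hap : p.length ≤ a
    · rw [hg_q a hap (by omega), hg_q b (by omega) (by omega), G.adj_comm,
        hq.adj_getVert_iff (by omega) (by omega)]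
      omega
    rcases Nat.eq_zero_or_pos a with rfl | ha₀
    · rw [hg_zero, hg_q b (by omega) (by omega), hq.adj_getVert_iff (by omega) (by omega)]
      omega
    · rw [hg_p a (by omega), hg_q b (by omega) (by omega)]
      simp only [(hpq a (n - b) ha₀ (by omega) (by omega) (by omega)).2, false_iff]
      omega

theorem _root_.Chordal.adj_of_anticomplete_walks {x y : V} {S T : Set V} (hG : Chordal G)
    (hxy : x ≠ y) (hST : ∀ s ∈ S, ∀ t ∈ T, s ≠ t ∧ ¬G.Adj s t)
    (p : G.Walk x y) (hp : ∀ v ∈ p.support, v = x ∨ v = y ∨ v ∈ S)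
    (q : G.Walk x y) (hq : ∀ v ∈ q.support, v = x ∨ v = y ∨ v ∈ T) : G.Adj x y := by
  by_contra hadj
  have two_le (r : G.Walk x y) : 2 ≤ r.length := by
    have h₀ : r.length ≠ 0 := fun h => hxy (Walk.eq_of_length_eq_zero h)
    have h₁ : r.length ≠ 1 := fun h => hadj (Walk.adj_of_length_eq_one h)
    omega
  obtain ⟨p, hpi, hpS⟩ := p.exists_isInducedPath hp
  obtain ⟨q, hqi, hqT⟩ := q.exists_isInducedPath hq
  obtain ⟨e⟩ := nonempty_cycleGraph_embedding_of_isInducedPath hpi hqi (two_le p) (two_le q)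
    fun a b ha₀ ha hb₀ hb => hST _ (hpi.1.getVert_mem_of_pos_of_lt hpS ha₀ ha) _
      (hqi.1.getVert_mem_of_pos_of_lt hqT hb₀ hb)
  exact (hG _ (by have := two_le p; have := two_le q; omega)).false e

theorem exists_walk_of_connected_induce_of_adj {C : Set V} (hC : (G.induce C).Connected)
    {x y c c' : V} (hc : c ∈ C) (hc' : c' ∈ C) (hxc : G.Adj x c) (hc'y : G.Adj c' y) :
    ∃ p : G.Walk x y, ∀ v ∈ p.support, v = x ∨ v = y ∨ v ∈ C := by
  obtain ⟨w⟩ := hC.preconnected ⟨c, hc⟩ ⟨c', hc'⟩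
  obtain ⟨w, hw⟩ : ∃ w : G.Walk c c', ∀ v ∈ w.support, v ∈ C :=
    ⟨w.map (Embedding.induce C).toHom, fun v hv => by
      have hv : v ∈ (w.map (Embedding.induce C).toHom).support := hv
      rw [Walk.support_map, List.mem_map] at hv
      obtain ⟨v, -, rfl⟩ := hv
      exact v.2⟩
  refine ⟨.cons hxc (w.concat hc'y), fun v hv => ?_⟩
  simp only [Walk.support_cons, Walk.support_concat, List.mem_append,
    List.mem_cons, List.not_mem_nil, or_false] at hv
  rcases hv with rfl | hv | rfl
  exacts [.inl rfl, .inr (.inr (hw v hv)), .inr (.inl rfl)]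

def IsDistLayering (G : SimpleGraph V) (K : Set V) (A : ℕ → Set V) : Prop :=
  ∀ i v, v ∈ A i ↔ ∃ k ∈ K, G.Reachable v k ∧ G.dist v k = i ∧
    ∀ k' ∈ K, G.Reachable v k' → i ≤ G.dist v k'

namespace IsDistLayering

variable {K : Set V} {A : ℕ → Set V}

theorem exists_walk_length_eq (hA : G.IsDistLayering K A) {j : ℕ} {x : V} (hx : x ∈ A j) :
    ∃ k ∈ K, ∃ p : G.Walk x k, p.length = j := by
  obtain ⟨k, hk, hr, hd, -⟩ := (hA j x).1 hx
  obtain ⟨p, hp⟩ := hr.exists_walk_length_eq_dist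
  exact ⟨k, hk, p, hp.trans hd⟩

theorem ne_and_not_adj (hA : G.IsDistLayering K A) {j : ℕ} {c t : V} (hc : c ∈ A (j + 1))
    (ht : ∃ k ∈ K, ∃ r : G.Walk t k, r.length < j) : c ≠ t ∧ ¬G.Adj c t := by
  obtain ⟨k, hk, r, hr⟩ := ht
  obtain ⟨-, -, -, -, hmin⟩ := (hA (j + 1) c).1 hc
  refine ⟨?_, fun hct => ?_⟩
  · rintro rfl
    have := hmin k hk r.reachable
    have := dist_le r
    omega
  · have := hmin k hk (r.cons hct).reachable
    have := dist_le (r.cons hct)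
    rw [Walk.length_cons] at this
    omega

theorem exists_walk_below (hA : G.IsDistLayering K A) (hK : G.IsClique K) {j : ℕ} (hj : 0 < j)
    {x y : V} (hx : x ∈ A j) (hy : y ∈ A j) :
    ∃ q : G.Walk x y, ∀ v ∈ q.support,
      v = x ∨ v = y ∨ v ∈ {t | ∃ k ∈ K, ∃ r : G.Walk t k, r.length < j} := by
  obtain ⟨kx, hkx, px, hpx⟩ := hA.exists_walk_length_eq hx
  obtain ⟨ky, hky, py, hpy⟩ := hA.exists_walk_length_eq hy
  obtain ⟨b, hb⟩ : ∃ b : G.Walk kx ky, ∀ v ∈ b.support, v = kx ∨ v = ky := by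
    by_cases h : kx = ky
    · subst h
      exact ⟨.nil, by simp⟩
    · exact ⟨(hK hkx hky h).toWalk, by simp⟩
  have below {u k : V} (hk : k ∈ K) (p : G.Walk u k) (hp : p.length = j) {v : V}
      (hv : v ∈ p.support) : v = u ∨ ∃ k ∈ K, ∃ r : G.Walk v k, r.length < j := by
    refine or_iff_not_imp_left.mpr fun hvu => ?_
    obtain ⟨r, hr⟩ := p.exists_walk_length_lt_of_mem_support hv hvu
    exact ⟨k, hk, r, hp ▸ hr⟩
  refine ⟨px.append (b.append py.reverse), fun v hv => ?_⟩
  simp only [Walk.mem_support_append_iff, Walk.support_reverse, List.mem_reverse] at hv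
  rcases hv with hv | hv | hv
  · exact (below hkx px hpx hv).imp_right .inr
  · rcases hb v hv with rfl | rfl
    exacts [.inr (.inr ⟨v, hkx, .nil, hj⟩), .inr (.inr ⟨v, hky, .nil, hj⟩)]
  · rcases below hky py hpy hv with rfl | h
    exacts [.inr (.inl rfl), .inr (.inr h)]

end IsDistLayering

end SimpleGraph

theorem neighbors_of_component_clique_general (V : Type*) (G : SimpleGraph V)
    (hch : Chordal G) (K : Set V) (hK : G.IsClique K)
    (A : ℕ → Set V)
    (hA : ∀ i v, v ∈ A i ↔ ∃ k ∈ K, G.Reachable v k ∧ G.dist v k = i ∧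
      ∀ k' ∈ K, G.Reachable v k' → i ≤ G.dist v k')
    (i : ℕ) (hi : 1 ≤ i) (C : Set V) (hC : C ⊆ A i)
    (hconn : (G.induce C).Connected) :
    G.IsClique ({v | v ∉ C ∧ ∃ c ∈ C, G.Adj c v} ∩ A (i - 1)) := by
  have hA : G.IsDistLayering K A := hA
  rintro x ⟨⟨-, cx, hcx, hcxx⟩, hx⟩ y ⟨⟨-, cy, hcy, hcyy⟩, hy⟩ hxy
  obtain ⟨j, rfl⟩ : ∃ j, i = j + 1 := ⟨i - 1, by omega⟩
  rw [Nat.add_sub_cancel] at hx hy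
  rcases Nat.eq_zero_or_pos j with rfl | hj
  · obtain ⟨kx, hkx, px, hpx⟩ := hA.exists_walk_length_eq hx
    obtain ⟨ky, hky, py, hpy⟩ := hA.exists_walk_length_eq hy
    rw [Walk.eq_of_length_eq_zero hpx, Walk.eq_of_length_eq_zero hpy] at hxy ⊢
    exact hK hkx hky hxy
  obtain ⟨p, hp⟩ := exists_walk_of_connected_induce_of_adj hconn hcx hcy hcxx.symm hcyy
  obtain ⟨q, hq⟩ := hA.exists_walk_below hK hj hx hy
  exact hch.adj_of_anticomplete_walks hxy (fun c hc _ ht => hA.ne_and_not_adj (hC hc) ht)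
    p hp q hq

/-- in a chordal graph, if `C ⊆ A_i` (the set of vertices at distance
exactly `i ≥ 1` from a clique `K`) induces a connected subgraph, then
`N(C) ∩ A_{i-1}` is a clique. -/
theorem neighbors_of_component_clique (V : Type*) [Fintype V] (G : SimpleGraph V)
    (hch : Chordal G) (K : Set V) (hK : G.IsClique K)
    (A : ℕ → Set V)
    (hA : ∀ i v, v ∈ A i ↔ ∃ k ∈ K, G.Reachable v k ∧ G.dist v k = i ∧
      ∀ k' ∈ K, G.Reachable v k' → i ≤ G.dist v k')
    (i : ℕ) (hi : 1 ≤ i) (C : Set V) (hC : C ⊆ A i)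
    (hconn : (G.induce C).Connected) :
    G.IsClique ({v | v ∉ C ∧ ∃ c ∈ C, G.Adj c v} ∩ A (i - 1)) :=
  neighbors_of_component_clique_general V G hch K hK A hA i hi C hC hconn
end

section
/- Let G = (P_2 □ P_k) ∘ K_1 for k ≥ 2. Then b(G) = 3 = ω(G) + 1, so the bound b(G) ≤ ω(G) can fail for graphs whose longest induced cycle is C_4. -/
open SimpleGraph

section Defs
variable {V : Type*}

namespace BondageAux
open Sum Finset SimpleGraph

/-! ### Corona adjacency -/

variable {V : Type*}

lemma corona_adj_ll {G : SimpleGraph V} {u v : V} :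
    (coronaK1 G).Adj (inl u) (inl v) ↔ G.Adj u v := by
  simp only [coronaK1, fromRel_adj]
  constructor
  · rintro ⟨h, (⟨a,b,ha,hb,hab⟩|⟨a,ha,hb⟩)|(⟨a,b,ha,hb,hab⟩|⟨a,ha,hb⟩)⟩
    · cases inl_injective ha; cases inl_injective hb; exact hab
    · simp at hb
    · cases inl_injective ha; cases inl_injective hb; exact hab.symm
    · simp at hb
  · intro h; exact ⟨by simp [h.ne], Or.inl (Or.inl ⟨u, v, rfl, rfl, h⟩)⟩

lemma corona_adj_lr {G : SimpleGraph V} {u v : V} :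
    (coronaK1 G).Adj (inl u) (inr v) ↔ u = v := by
  simp [coronaK1, fromRel_adj]; aesop

lemma corona_adj_r {G : SimpleGraph V} {u : V} {w : V ⊕ V} :
    (coronaK1 G).Adj (inr u) w ↔ w = inl u := by
  simp [coronaK1, fromRel_adj]; aesop

/-! ### The grid -/

variable {k : ℕ}

abbrev Vk (k : ℕ) := Fin 2 × Fin k
abbrev Gk (k : ℕ) : SimpleGraph (Vk k) := pathGraph 2 □ pathGraph k
abbrev W (k : ℕ) := Vk k ⊕ Vk k
abbrev GG (k : ℕ) : SimpleGraph (W k) := coronaK1 (Gk k)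

def hnbr (j : Fin k) : Fin k :=
  if h : j.val + 1 < k then ⟨j.val + 1, h⟩
  else ⟨j.val - 1, lt_of_le_of_lt (Nat.sub_le _ _) j.isLt⟩

lemma hnbr_adj (hk : 2 ≤ k) (j : Fin k) : (pathGraph k).Adj j (hnbr j) := by
  rw [pathGraph_adj]
  unfold hnbr
  split
  · left; rfl
  · next h => right; simp only; omega

def nb1 (v : Vk k) : Vk k := (1 - v.1, v.2)
def nb2 (v : Vk k) : Vk k := (v.1, hnbr v.2)

lemma nb1_adj (v : Vk k) : (Gk k).Adj (nb1 v) v := by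
  apply SimpleGraph.boxProd_adj.2
  left
  refine ⟨?_, rfl⟩
  have : ∀ i : Fin 2, (pathGraph 2).Adj (1 - i) i := by
    intro i; fin_cases i <;> (rw [pathGraph_adj]; decide)
  exact this v.1

lemma nb2_adj (hk : 2 ≤ k) (v : Vk k) : (Gk k).Adj (nb2 v) v := by
  apply SimpleGraph.boxProd_adj.2
  right
  exact ⟨(hnbr_adj hk v.2).symm, rfl⟩

lemma nb1_ne_nb2 (v : Vk k) : nb1 v ≠ nb2 v := by
  have h : ∀ i : Fin 2, 1 - i ≠ i := by decide
  intro hh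
  exact h v.1 (congrArg Prod.fst hh)

/-! ### Sym2 distinctness helpers -/

lemma pend_ne_pend {a b : Vk k} (h : a ≠ b) :
    s(inl a, (inr a : W k)) ≠ s(inl b, inr b) := by
  rw [Ne, Sym2.eq_iff]
  rintro (⟨h1, h2⟩ | ⟨h1, h2⟩)
  · exact h (inl_injective h1)
  · simp at h1

lemma pend_ne_ll {a b c : Vk k} :
    s(inl a, (inr a : W k)) ≠ s(inl b, inl c) := by
  rw [Ne, Sym2.eq_iff]
  rintro (⟨h1, h2⟩ | ⟨h1, h2⟩) <;> simp_all

lemma ll_ne_ll {a b c d : Vk k} (h1 : ¬(a = c ∧ b = d)) (h2 : ¬(a = d ∧ b = c)) :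
    s((inl a : W k), inl b) ≠ s(inl c, inl d) := by
  rw [Ne, Sym2.eq_iff]
  rintro (⟨e1, e2⟩ | ⟨e1, e2⟩)
  · exact h1 ⟨inl_injective e1, inl_injective e2⟩
  · exact h2 ⟨inl_injective e1, inl_injective e2⟩

/-! ### Avoiding a small deleted edge set -/

lemma exists_good_nbr (hk : 2 ≤ k) (A : Finset (Sym2 (W k))) (hA : A.card ≤ 2)
    (v : Vk k) (hv : s(inl v, inr v) ∈ A) :
    ∃ u, (Gk k).Adj u v ∧ s(inl u, inr u) ∉ A ∧ s(inl u, inl v) ∉ A := by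
  by_contra hcon
  push_neg at hcon
  -- pick the two candidate neighbours
  set u₁ := nb1 v with hu₁
  set u₂ := nb2 v with hu₂
  have hadj₁ : (Gk k).Adj u₁ v := nb1_adj v
  have hadj₂ : (Gk k).Adj u₂ v := nb2_adj hk v
  have hne12 : u₁ ≠ u₂ := nb1_ne_nb2 v
  have hne1v : u₁ ≠ v := hadj₁.ne
  have hne2v : u₂ ≠ v := hadj₂.ne
  -- bad witnesses
  have get : ∀ u, (Gk k).Adj u v →
      ∃ x ∈ A, x = s(inl u, (inr u : W k)) ∨ x = s(inl u, inl v) := by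
    intro u hu
    by_cases hp : s(inl u, (inr u : W k)) ∈ A
    · exact ⟨_, hp, Or.inl rfl⟩
    · exact ⟨_, hcon u hu hp, Or.inr rfl⟩
  obtain ⟨x₁, hx₁A, hx₁⟩ := get u₁ hadj₁
  obtain ⟨x₂, hx₂A, hx₂⟩ := get u₂ hadj₂
  have hpv1 : s(inl v, (inr v : W k)) ≠ x₁ := by
    rcases hx₁ with rfl | rfl
    · exact pend_ne_pend hne1v.symm
    · exact pend_ne_ll
  have hpv2 : s(inl v, (inr v : W k)) ≠ x₂ := by
    rcases hx₂ with rfl | rfl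
    · exact pend_ne_pend hne2v.symm
    · exact pend_ne_ll
  have h12 : x₁ ≠ x₂ := by
    rcases hx₁ with rfl | rfl <;> rcases hx₂ with rfl | rfl
    · exact pend_ne_pend hne12
    · exact pend_ne_ll
    · exact Ne.symm pend_ne_ll
    · exact ll_ne_ll (fun h => hne12 h.1) (fun h => hne1v h.1)
  have hsub : ({s(inl v, (inr v : W k)), x₁, x₂} : Finset (Sym2 (W k))) ⊆ A := by
    intro x hx
    simp only [Finset.mem_insert, Finset.mem_singleton] at hx
    rcases hx with rfl | rfl | rfl <;> assumption
  have hcard3 : ({s(inl v, (inr v : W k)), x₁, x₂} : Finset (Sym2 (W k))).card = 3 := by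
    rw [Finset.card_insert_of_notMem, Finset.card_insert_of_notMem, Finset.card_singleton]
    · simpa using h12
    · simp [hpv1, hpv2]
  have := Finset.card_le_card hsub
  omega







lemma card_Vk : Fintype.card (Vk k) = 2 * k := by
  simp [Fintype.card_prod]

/-- Upper bound construction: with a good neighbour for every broken pendant,
there is a dominating set of size `2k` after deletion. -/
lemma dom_upper (A : Finset (Sym2 (W k)))
    (H : ∀ v : Vk k, s(inl v, inr v) ∈ A →
      ∃ u, (Gk k).Adj u v ∧ s(inl u, inr u) ∉ A ∧ s(inl u, inl v) ∉ A) :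
    domNum ((GG k).deleteEdges ↑A) ≤ 2 * k := by
  classical
  set T : Finset (Vk k) := univ.filter (fun v => s(inl v, inr v) ∈ A) with hT
  have hmemT : ∀ v, v ∈ T ↔ s(inl v, (inr v : W k)) ∈ A := by
    intro v; simp [hT]
  set g : Vk k → W k := fun v => if v ∈ T then inr v else inl v with hg
  have hginj : Function.Injective g := by
    intro a b hab
    simp only [hg] at hab
    split_ifs at hab <;> simp_all
  have hcard : (univ.image g).card = 2 * k := by
    rw [Finset.card_image_of_injective _ hginj, card_univ, card_Vk]
  apply Nat.sInf_le
  refine ⟨univ.image g, hcard, ?_⟩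
  rintro (v | v)
  · by_cases hvT : v ∈ T
    · obtain ⟨u, hadj, hpu, hev⟩ := H v ((hmemT v).1 hvT)
      right
      refine ⟨inl u, ?_, ?_⟩
      · have : g u = inl u := by simp [hg, (hmemT u).not.2 hpu]
        simp only [Finset.coe_image, Set.mem_image, Finset.mem_coe]
        exact ⟨u, by simp, this⟩
      · rw [SimpleGraph.deleteEdges_adj]
        exact ⟨corona_adj_ll.2 hadj, by simpa using hev⟩
    · left
      have : g v = inl v := by simp [hg, hvT]
      simp only [Finset.coe_image, Set.mem_image, Finset.mem_coe]
      exact ⟨v, by simp, this⟩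
  · by_cases hvT : v ∈ T
    · left
      have : g v = inr v := by simp [hg, hvT]
      simp only [Finset.coe_image, Set.mem_image, Finset.mem_coe]
      exact ⟨v, by simp, this⟩
    · right
      refine ⟨inl v, ?_, ?_⟩
      · have : g v = inl v := by simp [hg, hvT]
        simp only [Finset.coe_image, Set.mem_image, Finset.mem_coe]
        exact ⟨v, by simp, this⟩
      · rw [SimpleGraph.deleteEdges_adj]
        refine ⟨corona_adj_lr.2 rfl, ?_⟩
        simpa using (hmemT v).not.1 hvT

/-- Lower bound: any dominating set of any spanning subgraph has size `≥ 2k`. -/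
lemma dom_lower (G' : SimpleGraph (W k)) (hle : G' ≤ GG k) (S : Finset (W k))
    (hS : Dominates G' ↑S) : 2 * k ≤ S.card := by
  classical
  have h : ∀ v : Vk k, ∃ s ∈ S, s = inl v ∨ s = inr v := by
    intro v
    rcases hS (inr v) with h | ⟨u, hu, hadj⟩
    · exact ⟨inr v, by simpa using h, Or.inr rfl⟩
    · have : u = inl v := corona_adj_r.1 (hle hadj).symm
      exact ⟨u, by simpa using hu, Or.inl this⟩
  choose f hf1 hf2 using h
  have hinj : Function.Injective f := by
    intro a b hab
    rcases hf2 a with h | h <;> rcases hf2 b with h' | h' <;>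
      rw [h, h'] at hab <;> simp_all
  calc 2 * k = (univ : Finset (Vk k)).card := by rw [card_univ, card_Vk]
    _ ≤ S.card := Finset.card_le_card_of_injOn f (fun v _ => hf1 v) hinj.injOn

lemma domNum_GG : domNum (GG k) = 2 * k := by
  apply le_antisymm
  · have := dom_upper (k := k) ∅ (by simp)
    simpa using this
  · apply le_csInf
    · exact ⟨2 * k, univ.image inl, by
        rw [Finset.card_image_of_injective _ inl_injective, card_univ, card_Vk], by
        rintro (v | v)
        · left; simp
        · right
          exact ⟨inl v, by simp, corona_adj_lr.2 rfl⟩⟩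
    · rintro n ⟨S, rfl, hdom⟩
      exact dom_lower _ le_rfl S hdom


def x0 (hk : 2 ≤ k) : Vk k := (0, ⟨0, by omega⟩)
def xa (hk : 2 ≤ k) : Vk k := (1, ⟨0, by omega⟩)
def xb (hk : 2 ≤ k) : Vk k := (0, ⟨1, by omega⟩)

lemma xa_ne_xb (hk : 2 ≤ k) : xa hk ≠ xb hk := by
  intro h
  have := congrArg Prod.fst h
  simp [xa, xb] at this

lemma x0_ne_xa (hk : 2 ≤ k) : x0 hk ≠ xa hk := by
  intro h
  have := congrArg Prod.fst h
  simp [x0, xa] at this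

lemma x0_ne_xb (hk : 2 ≤ k) : x0 hk ≠ xb hk := by
  intro h
  have := congrArg Prod.snd h
  simp [x0, xb] at this

lemma adj_x0_xa (hk : 2 ≤ k) : (Gk k).Adj (x0 hk) (xa hk) := by
  apply SimpleGraph.boxProd_adj.2
  left
  exact ⟨by rw [pathGraph_adj]; simp [x0, xa], rfl⟩

lemma adj_x0_xb (hk : 2 ≤ k) : (Gk k).Adj (x0 hk) (xb hk) := by
  apply SimpleGraph.boxProd_adj.2
  right
  exact ⟨by rw [pathGraph_adj]; simp [x0, xb], rfl⟩

lemma adj_x0_iff (hk : 2 ≤ k) (u : Vk k) :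
    (Gk k).Adj u (x0 hk) ↔ u = xa hk ∨ u = xb hk := by
  constructor
  · intro h
    rcases SimpleGraph.boxProd_adj.1 h with ⟨h1, h2⟩ | ⟨h1, h2⟩
    · left
      rw [pathGraph_adj] at h1
      have e : ((x0 hk).1).val = 0 := rfl
      rw [e] at h1
      have hval : u.1.val = 1 := by omega
      have h1' : u.1 = (xa hk).1 := Fin.eq_of_val_eq hval
      have h2' : u.2 = (xa hk).2 := h2
      exact Prod.ext h1' h2'
    · right
      rw [pathGraph_adj] at h1
      have e : ((x0 hk).2).val = 0 := rfl
      rw [e] at h1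
      have hval : u.2.val = 1 := by omega
      have h2' : u.2 = (xb hk).2 := Fin.eq_of_val_eq hval
      have h1' : u.1 = (xb hk).1 := h2
      exact Prod.ext h1' h2'
  · rintro (rfl | rfl)
    · exact (adj_x0_xa hk).symm
    · exact (adj_x0_xb hk).symm

/-- The three deleted edges isolating both `inl x0` and `inr x0`. -/
def A3 (hk : 2 ≤ k) : Finset (Sym2 (W k)) :=
  {s(inl (x0 hk), inr (x0 hk)), s(inl (x0 hk), inl (xa hk)), s(inl (x0 hk), inl (xb hk))}

lemma A3_card (hk : 2 ≤ k) : (A3 hk).card = 3 := by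
  rw [A3, Finset.card_insert_of_notMem, Finset.card_insert_of_notMem,
    Finset.card_singleton]
  · simp only [Finset.mem_singleton]
    exact ll_ne_ll (fun h => xa_ne_xb hk h.2) (fun h => x0_ne_xb hk h.1)
  · simp only [Finset.mem_insert, Finset.mem_singleton]
    push_neg
    exact ⟨pend_ne_ll, pend_ne_ll⟩

lemma A3_subset (hk : 2 ≤ k) : ↑(A3 hk) ⊆ (GG k).edgeSet := by
  intro e he
  simp only [A3, Finset.coe_insert, Set.mem_insert_iff, Finset.coe_singleton,
    Set.mem_singleton_iff] at he
  rcases he with rfl | rfl | rfl <;> rw [SimpleGraph.mem_edgeSet]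
  · exact corona_adj_lr.2 rfl
  · exact corona_adj_ll.2 (adj_x0_xa hk)
  · exact corona_adj_ll.2 (adj_x0_xb hk)

lemma pend_x0_mem (hk : 2 ≤ k) : s(inl (x0 hk), inr (x0 hk)) ∈ A3 hk := by
  simp [A3]

lemma domNum_del_A3 (hk : 2 ≤ k) :
    domNum ((GG k).deleteEdges ↑(A3 hk)) = 2 * k + 1 := by
  classical
  have hub : ∃ S : Finset (W k), S.card = 2 * k + 1 ∧
      Dominates ((GG k).deleteEdges ↑(A3 hk)) ↑S := by
    refine ⟨insert (inr (x0 hk)) (univ.image inl), ?_, ?_⟩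
    · rw [Finset.card_insert_of_notMem (by simp),
        Finset.card_image_of_injective _ inl_injective, card_univ, card_Vk]
    · rintro (v | v)
      · left; simp
      · by_cases hv : v = x0 hk
        · left; simp [hv]
        · right
          refine ⟨inl v, by simp, ?_⟩
          rw [SimpleGraph.deleteEdges_adj]
          refine ⟨corona_adj_lr.2 rfl, ?_⟩
          simp only [A3, Finset.coe_insert, Set.mem_insert_iff, Finset.coe_singleton,
            Set.mem_singleton_iff]
          push_neg
          exact ⟨pend_ne_pend hv, pend_ne_ll, pend_ne_ll⟩
  obtain ⟨S₀, hS₀c, hS₀d⟩ := hub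
  apply le_antisymm
  · exact Nat.sInf_le ⟨S₀, hS₀c, hS₀d⟩
  · apply le_csInf
    · exact ⟨2 * k + 1, S₀, hS₀c, hS₀d⟩
    rintro n ⟨S, rfl, hdom⟩
    -- `inl x0 ∈ S`
    have hx0S : inl (x0 hk) ∈ S := by
      rcases hdom (inl (x0 hk)) with h | ⟨u, hu, hadj⟩
      · simpa using h
      · exfalso
        rw [SimpleGraph.deleteEdges_adj] at hadj
        obtain ⟨hGG, hnot⟩ := hadj
        rcases u with w | w
        · have hw : (Gk k).Adj w (x0 hk) := corona_adj_ll.1 hGG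
          rcases (adj_x0_iff hk w).1 hw with rfl | rfl
          · refine hnot ?_
            rw [Sym2.eq_swap]
            simp [A3]
          · refine hnot ?_
            rw [Sym2.eq_swap]
            simp [A3]
        · have : inl (x0 hk) = inl w := corona_adj_r.1 hGG
          cases inl_injective this
          refine hnot ?_
          rw [Sym2.eq_swap]
          simp [A3]
    -- choice of a private dominator for every pendant
    have h : ∀ v : Vk k, ∃ s, s ∈ S ∧ (s = inl v ∨ s = inr v) ∧ (v = x0 hk → s = inr v) := by
      intro v
      rcases hdom (inr v) with h | ⟨u, hu, hadj⟩
      · exact ⟨inr v, by simpa using h, Or.inr rfl, fun _ => rfl⟩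
      · rw [SimpleGraph.deleteEdges_adj] at hadj
        obtain ⟨hGG, hnot⟩ := hadj
        have hu' : u = inl v := corona_adj_r.1 hGG.symm
        subst hu'
        refine ⟨inl v, by simpa using hu, Or.inl rfl, fun hv => absurd ?_ hnot⟩
        subst hv
        simpa using pend_x0_mem hk
      
    choose f hf1 hf2 hf3 using h
    have hinj : Function.Injective f := by
      intro a b hab
      rcases hf2 a with h | h <;> rcases hf2 b with h' | h' <;>
        rw [h, h'] at hab <;> simp_all
    have hnotmem : inl (x0 hk) ∉ univ.image f := by
      simp only [Finset.mem_image]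
      rintro ⟨v, -, hv⟩
      rcases hf2 v with h | h
      · have hveq : v = x0 hk := inl_injective (h ▸ hv)
        rw [hveq] at h
        rw [hf3 (x0 hk) rfl] at h
        simp at h
      · rw [h] at hv
        simp at hv
    have hsub : insert (inl (x0 hk)) (univ.image f) ⊆ S := by
      apply Finset.insert_subset hx0S
      intro w hw
      obtain ⟨v, -, rfl⟩ := Finset.mem_image.1 hw
      exact hf1 v
    calc 2 * k + 1
        = (insert (inl (x0 hk)) (univ.image f)).card := by
          rw [Finset.card_insert_of_notMem hnotmem,
            Finset.card_image_of_injective _ hinj, card_univ, card_Vk]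
      _ ≤ S.card := Finset.card_le_card hsub

lemma bondage_eq (hk : 2 ≤ k) : bondageNum (GG k) = 3 := by
  classical
  have hdom : domNum (GG k) = 2 * k := domNum_GG
  have mem3 : 3 ∈ {n | ∃ A : Finset (Sym2 (W k)), ↑A ⊆ (GG k).edgeSet ∧ A.card = n ∧
      domNum ((GG k).deleteEdges ↑A) = domNum (GG k) + 1} :=
    ⟨A3 hk, A3_subset hk, A3_card hk, by rw [domNum_del_A3 hk, hdom]⟩
  apply le_antisymm (Nat.sInf_le mem3)
  apply le_csInf ⟨3, mem3⟩
  rintro n ⟨A, hsub, rfl, heq⟩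
  by_contra hlt
  push_neg at hlt
  have hle : domNum ((GG k).deleteEdges ↑A) ≤ 2 * k :=
    dom_upper A (fun v hv => exists_good_nbr hk A (by omega) v hv)
  rw [heq, hdom] at hle
  omega

/-! ### Clique number -/

def par (v : Vk k) : ZMod 2 := (v.1.val : ZMod 2) + (v.2.val : ZMod 2)

lemma zmod2_flip : ∀ a b : ZMod 2, a = b + 1 → b = a + 1 := by decide

lemma adj_par {u v : Vk k} (h : (Gk k).Adj u v) : par v = par u + 1 := by
  rcases SimpleGraph.boxProd_adj.1 h with ⟨h1, h2⟩ | ⟨h1, h2⟩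
  · rw [pathGraph_adj] at h1
    rcases h1 with h1 | h1
    · have : (v.1.val : ZMod 2) = (u.1.val : ZMod 2) + 1 := by
        exact_mod_cast congrArg (Nat.cast : ℕ → ZMod 2) h1.symm
      simp only [par, this, h2]
      ring
    · apply zmod2_flip
      have : (u.1.val : ZMod 2) = (v.1.val : ZMod 2) + 1 := by
        exact_mod_cast congrArg (Nat.cast : ℕ → ZMod 2) h1.symm
      simp only [par, this, h2]
      ring
  · rw [pathGraph_adj] at h1
    rcases h1 with h1 | h1
    · have : (v.2.val : ZMod 2) = (u.2.val : ZMod 2) + 1 := by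
        exact_mod_cast congrArg (Nat.cast : ℕ → ZMod 2) h1.symm
      simp only [par, this, h2]
      ring
    · apply zmod2_flip
      have : (u.2.val : ZMod 2) = (v.2.val : ZMod 2) + 1 := by
        exact_mod_cast congrArg (Nat.cast : ℕ → ZMod 2) h1.symm
      simp only [par, this, h2]
      ring

lemma grid_triangle_free {a b c : Vk k} (hab : (Gk k).Adj a b) (hac : (Gk k).Adj a c)
    (hbc : (Gk k).Adj b c) : False := by
  have h1 := adj_par hab
  have h2 := adj_par hac
  have h3 := adj_par hbc
  rw [h1] at h3
  rw [h2] at h3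
  have : ∀ p : ZMod 2, p + 1 ≠ p + 1 + 1 := by decide
  exact this _ h3

lemma no_inr_triangle {t : Vk k} {b c : W k} (h1 : (GG k).Adj (inr t) b)
    (h2 : (GG k).Adj (inr t) c) (h3 : (GG k).Adj b c) : False := by
  have hb := corona_adj_r.1 h1
  have hc := corona_adj_r.1 h2
  rw [hb, hc] at h3
  exact (GG k).irrefl h3

lemma GG_triangle_free {a b c : W k} (hab : (GG k).Adj a b) (hac : (GG k).Adj a c)
    (hbc : (GG k).Adj b c) : False := by
  rcases a with t | t
  · rcases b with u | u
    · rcases c with w | w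
      · exact grid_triangle_free (corona_adj_ll.1 hab) (corona_adj_ll.1 hac)
          (corona_adj_ll.1 hbc)
      · exact no_inr_triangle hac.symm hbc.symm hab
    · exact no_inr_triangle hab.symm hbc hac
  · exact no_inr_triangle hab hac hbc

lemma clique_two (hk : 2 ≤ k) : cliqueNum' (GG k) = 2 := by
  classical
  have hub : ∀ n ∈ {n | ∃ s : Finset (W k), (GG k).IsNClique n s}, n ≤ 2 := by
    rintro n ⟨s, hs⟩
    by_contra hn
    push_neg at hn
    have h3 : 3 ≤ s.card := by rw [hs.2]; omega
    obtain ⟨t, hts, htc⟩ := Finset.exists_subset_card_eq h3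
    obtain ⟨a, b, c, hab, hac, hbc, rfl⟩ := Finset.card_eq_three.1 htc
    have hclique := hs.1
    have h1 : (GG k).Adj a b := hclique (hts (by simp)) (hts (by simp)) hab
    have h2 : (GG k).Adj a c := hclique (hts (by simp)) (hts (by simp)) hac
    have h3' : (GG k).Adj b c := hclique (hts (by simp)) (hts (by simp)) hbc
    exact GG_triangle_free h1 h2 h3'
  have hmem2 : 2 ∈ {n | ∃ s : Finset (W k), (GG k).IsNClique n s} := by
    refine ⟨{inl (x0 hk), inr (x0 hk)}, ?_, ?_⟩
    · intro a ha b hb hne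
      simp only [Finset.coe_insert, Set.mem_insert_iff, Finset.coe_singleton,
        Set.mem_singleton_iff] at ha hb
      rcases ha with rfl | rfl <;> rcases hb with rfl | rfl
      · exact absurd rfl hne
      · exact corona_adj_lr.2 rfl
      · exact (corona_adj_lr.2 rfl).symm
      · exact absurd rfl hne
    · rw [Finset.card_insert_of_notMem (by simp), Finset.card_singleton]
  apply le_antisymm
  · exact csSup_le ⟨2, hmem2⟩ hub
  · exact le_csSup ⟨2, hub⟩ hmem2
end BondageAux

/-- `b((P₂ □ P_k) ∘ K₁) = 3 = ω(G) + 1` for `k ≥ 2`. -/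
theorem bondage_corona_grid (k : ℕ) (hk : 2 ≤ k) :
    bondageNum (coronaK1 (pathGraph 2 □ pathGraph k)) = 3 ∧
    3 = cliqueNum' (coronaK1 (pathGraph 2 □ pathGraph k)) + 1 := by
  refine ⟨BondageAux.bondage_eq hk, ?_⟩
  rw [BondageAux.clique_two hk]
end Defs
end
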